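/- arXiv:1805.00675 — 3 statements merged into one kernel-verified Lean document; each statement's English description precedes it below -/
import Mathlib

section
/- Let Λ > 0 and ε ∈ (0, 2^{−e}] with eΛ < min{ln(1/ε), e ln 2}. If K + 1 ≥ ln(1/ε)/W(ln(1/ε)/(Λe)) where W is the Lambert W function, then (eΛ/(K+1))^{K+1} ≤ ε. -/
/-! With `N = K + 1` and `y = N / (eΛ)` one has `(eΛ/N)^N = exp (-(eΛ) · y log y)`. The map
`y ↦ y log y` is increasing for `y ≥ e⁻¹`, and the Lambert equation makes the threshold
`ln(1/ε) / w` equal to `eΛ · e^w`, so `K + 1 ≥ ln(1/ε) / w` means `y ≥ e^w`, whence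
`eΛ · y log y ≥ eΛ · w e^w = ln(1/ε)`. -/

open Real

lemma div_pow_self_eq_exp_neg_mul_log {c : ℝ} (hc : 0 < c) {n : ℕ} (hn : 0 < n) :
    (c / n) ^ n = exp (-(c * (n / c * log (n / c)))) := by
  have hcn : 0 < c / n := by positivity
  rw [← exp_log hcn, ← exp_nat_mul, ← inv_div, log_inv]
  congr 1
  field_simp

lemma div_pow_self_le_exp_neg {c t : ℝ} (hc : 0 < c) (ht : -1 ≤ t) {n : ℕ}
    (hn : c * exp t ≤ n) : (c / n) ^ n ≤ exp (-(c * (t * exp t))) := by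
  have hn_pos : 0 < n := by exact_mod_cast (mul_pos hc (exp_pos t)).trans_le hn
  have hy : exp t ≤ n / c := by rwa [le_div_iff₀' hc]
  have hmono : t * exp t ≤ n / c * log (n / c) := by
    have hmin : exp (-1) ≤ exp t := exp_le_exp.mpr ht
    simpa only [log_exp, mul_comm t] using
      mul_log_strictMonoOn.monotoneOn hmin (hmin.trans hy) hy
  rw [div_pow_self_eq_exp_neg_mul_log hc hn_pos]
  gcongr

theorem truncation_order_bound_general (Λ ε w : ℝ) (K : ℕ)
    (hΛ : 0 < Λ) (hε0 : 0 < ε) (hε1 : ε ≤ (2 : ℝ) ^ (-(Real.exp 1)))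
    (hw : w * Real.exp w = Real.log (1 / ε) / (Λ * Real.exp 1))
    (hK : Real.log (1 / ε) / w ≤ (K : ℝ) + 1) :
    (Real.exp 1 * Λ / ((K : ℝ) + 1)) ^ (K + 1) ≤ ε := by
  have hε_lt_one : ε < 1 :=
    hε1.trans_lt (rpow_lt_one_of_one_lt_of_neg one_lt_two (neg_lt_zero.mpr (exp_pos 1)))
  have hL : 0 < log (1 / ε) := log_pos ((one_lt_div hε0).mpr hε_lt_one)
  have hL_eq : exp 1 * Λ * (w * exp w) = log (1 / ε) := by
    rw [hw]; field_simp
  have hw_pos : 0 < w := pos_of_mul_pos_left (hw ▸ by positivity) (exp_pos w).le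
  have hthreshold : exp 1 * Λ * exp w ≤ ((K + 1 : ℕ) : ℝ) := by
    push_cast
    calc exp 1 * Λ * exp w = log (1 / ε) / w := by rw [← hL_eq]; field_simp
      _ ≤ K + 1 := hK
  calc (exp 1 * Λ / ((K : ℝ) + 1)) ^ (K + 1)
      ≤ exp (-(exp 1 * Λ * (w * exp w))) := by
        exact_mod_cast div_pow_self_le_exp_neg (by positivity) (by linarith) hthreshold
    _ = ε := by rw [hL_eq, one_div, log_inv, neg_neg, exp_log hε0]

/-- Truncation-order bound: let `Λ > 0`, `ε ∈ (0, 2^{−e}]` with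
`eΛ < min{ln(1/ε), e ln 2}`.  If `K + 1 ≥ ln(1/ε)/W(ln(1/ε)/(Λe))`, where
`w = W(ln(1/ε)/(Λe))` is the principal Lambert W value (the unique `w ≥ 0` with
`w·e^w = ln(1/ε)/(Λe)`), then `(eΛ/(K+1))^{K+1} ≤ ε`. -/
theorem truncation_order_bound (Λ ε w : ℝ) (K : ℕ)
    (hΛ : 0 < Λ) (hε0 : 0 < ε) (hε1 : ε ≤ (2 : ℝ) ^ (-(Real.exp 1)))
    (hsmall : Real.exp 1 * Λ < min (Real.log (1 / ε)) (Real.exp 1 * Real.log 2))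
    (hw0 : 0 ≤ w)
    (hw : w * Real.exp w = Real.log (1 / ε) / (Λ * Real.exp 1))
    (hK : Real.log (1 / ε) / w ≤ (K : ℝ) + 1) :
    (Real.exp 1 * Λ / ((K : ℝ) + 1)) ^ (K + 1) ≤ ε :=
  truncation_order_bound_general Λ ε w K hΛ hε0 hε1 hw hK
end

section
/- Fix an integer M ≥ 1 and Δ > 0, and let H : [0,MΔ] → ℂ^{N×N} be continuously differentiable with α := max_s ‖H(s)‖. For a hypercube C = [0,Δ]^q with corner times x_1,...,x_q ∈ [0,(M−1)Δ], the discretization error satisfies ‖∫_C H(x_1+y_1)⋯H(x_q+y_q) d^q y − Δ^q ∏_{j=1}^q H(x_j)‖ ≤ α^{q−1} Δ ∑_{k=1}^q (∏_{j≠k} ∫_0^Δ ds) · ∫_0^Δ ‖H'(x_k+s)‖ ds = α^{q−1} Δ^q ∑_{k=1}^q ∫_0^Δ ‖H'(x_k+s)‖ ds. -/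
/-!
Pointwise on the cube, the integrand minus `∏ H(x_j)` is a difference of two products of
factors of norm at most `α`, so telescoping bounds it by `α^{q-1} ∑_k ‖H(x_k+y_k) - H(x_k)‖`,
and each increment is at most `∫_0^Δ ‖H'(x_k+s)‖ ds`. Integrating this constant bound over a
cube of volume `Δ^q` gives the estimate.
-/

open scoped Matrix.Norms.L2Operator
open MeasureTheory Set

theorem Matrix.l2_opNorm_one_le {n 𝕜 : Type*} [RCLike 𝕜] [Fintype n] [DecidableEq n] :
    ‖(1 : Matrix n n 𝕜)‖ ≤ 1 := by
  rw [Matrix.cstar_norm_def, map_one]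
  exact ContinuousLinearMap.norm_id_le

theorem continuous_list_ofFn_prod {M : Type*} [Monoid M] [TopologicalSpace M] [ContinuousMul M]
    {q : ℕ} : Continuous fun v : Fin q → M => (List.ofFn v).prod := by
  simpa [List.ofFn_eq_map] using continuous_list_prod (f := fun (i : Fin q) (v : Fin q → M) => v i)
    (List.finRange q) fun i _ => continuous_apply i

section ProductBounds

variable {R : Type*} [SeminormedRing R] {α : ℝ}

theorem norm_list_ofFn_prod_le (h1 : ‖(1 : R)‖ ≤ 1) :
    ∀ {q : ℕ} (A : Fin q → R), (∀ j, ‖A j‖ ≤ α) → ‖(List.ofFn A).prod‖ ≤ α ^ q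
  | 0, _, _ => by simpa using h1
  | q + 1, A, hA => by
    rw [List.ofFn_succ, List.prod_cons, pow_succ']
    exact (norm_mul_le _ _).trans <| mul_le_mul (hA 0)
      (norm_list_ofFn_prod_le h1 _ fun j => hA j.succ) (norm_nonneg _)
      ((norm_nonneg _).trans (hA 0))

theorem norm_list_ofFn_prod_sub_prod_le (h1 : ‖(1 : R)‖ ≤ 1) :
    ∀ {q : ℕ} (A B : Fin q → R), (∀ j, ‖A j‖ ≤ α) → (∀ j, ‖B j‖ ≤ α) →
      ‖(List.ofFn A).prod - (List.ofFn B).prod‖ ≤ α ^ (q - 1) * ∑ j, ‖A j - B j‖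
  | 0, _, _, _, _ => by simp
  | q + 1, A, B, hA, hB => by
    set P := (List.ofFn fun j : Fin q => A j.succ).prod
    set Q := (List.ofFn fun j : Fin q => B j.succ).prod
    set S := ∑ j : Fin q, ‖A j.succ - B j.succ‖
    have hPQ : ‖P - Q‖ ≤ α ^ (q - 1) * S :=
      norm_list_ofFn_prod_sub_prod_le h1 _ _ (fun j => hA j.succ) fun j => hB j.succ
    have hQ : ‖Q‖ ≤ α ^ q := norm_list_ofFn_prod_le h1 _ fun j => hB j.succ
    have hpow : α * (α ^ (q - 1) * S) ≤ α ^ q * S := by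
      rcases q with _ | q
      · simp [S]
      · rw [← mul_assoc, Nat.add_sub_cancel, ← pow_succ']
    rw [List.ofFn_succ, List.ofFn_succ, List.prod_cons, List.prod_cons, Fin.sum_univ_succ,
      Nat.add_sub_cancel]
    calc ‖A 0 * P - B 0 * Q‖ = ‖A 0 * (P - Q) + (A 0 - B 0) * Q‖ := by noncomm_ring
      _ ≤ ‖A 0‖ * ‖P - Q‖ + ‖A 0 - B 0‖ * ‖Q‖ :=
        (norm_add_le _ _).trans (add_le_add (norm_mul_le _ _) (norm_mul_le _ _))
      _ ≤ α * (α ^ (q - 1) * S) + ‖A 0 - B 0‖ * α ^ q := by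
        gcongr
        · exact (norm_nonneg _).trans (hA 0)
        · exact hA 0
      _ ≤ α ^ q * (‖A 0 - B 0‖ + S) := by linarith

end ProductBounds

theorem norm_sub_le_integral_norm_deriv_of_mem_Icc {E : Type*} [NormedAddCommGroup E]
    [NormedSpace ℝ E] {f f' : ℝ → E} {a b y : ℝ} (hf : ∀ t ∈ Icc a b, HasDerivAt f (f' t) t)
    (hf' : IntervalIntegrable (fun t => ‖f' t‖) volume a b) (hy : y ∈ Icc a b) :
    ‖f y - f a‖ ≤ ∫ t in a..b, ‖f' t‖ := by
  have hsub : Icc a y ⊆ Icc a b := Icc_subset_Icc_right hy.2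
  have hf_Ioo : ∀ t ∈ Ioo a y, HasDerivAt f (f' t) t :=
    fun t ht => hf t (hsub (Ioo_subset_Icc_self ht))
  calc ‖f y - f a‖ ≤ ∫ t in a..y, ‖f' t‖ :=
        norm_sub_le_integral_of_norm_deriv_le_of_le hy.1
          (fun t ht => (hf t (hsub ht)).continuousAt.continuousWithinAt)
          (fun t ht => (hf_Ioo t ht).differentiableAt.differentiableWithinAt)
          (ae_of_all _ fun t ht => (congrArg norm (hf_Ioo t ht).deriv).le)
          (hf'.mono_set (uIcc_subset_uIcc_left (by rwa [uIcc_of_le (hy.1.trans hy.2)])))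
    _ ≤ ∫ t in a..b, ‖f' t‖ :=
        intervalIntegral.integral_mono_interval le_rfl hy.1 hy.2
          (ae_of_all _ fun _ => norm_nonneg _) hf'

theorem norm_setIntegral_sub_smul_le {X E : Type*} [MeasurableSpace X] [NormedAddCommGroup E]
    [NormedSpace ℝ E] [CompleteSpace E] {μ : Measure X} {s : Set X} {f : X → E} {c : E} {C : ℝ}
    (hs : μ s < ⊤) (hf : IntegrableOn f s μ) (hC : ∀ x ∈ s, ‖f x - c‖ ≤ C) :
    ‖(∫ x in s, f x ∂μ) - μ.real s • c‖ ≤ C * μ.real s := by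
  rw [← setIntegral_const, ← integral_sub hf (integrableOn_const hs.ne)]
  exact norm_setIntegral_le_of_norm_le_const hs hC

theorem setOf_forall_mem_Icc_eq_Icc {ι : Type*} (a b : ℝ) :
    {y : ι → ℝ | ∀ i, y i ∈ Icc a b} = Icc (fun _ => a) (fun _ => b) := by
  ext y
  simp [Pi.le_def, forall_and]

theorem norm_setIntegral_cube_list_ofFn_prod_sub_le {R : Type*} [NormedRing R] [NormedSpace ℝ R]
    [CompleteSpace R] (h1 : ‖(1 : R)‖ ≤ 1) {q : ℕ} {Δ α : ℝ} (hΔ : 0 ≤ Δ) {H H' : ℝ → R}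
    {x : Fin q → ℝ} (hderiv : ∀ j, ∀ s ∈ Icc 0 Δ, HasDerivAt H (H' (x j + s)) (x j + s))
    (hcont : ∀ j, ContinuousOn (fun s => H' (x j + s)) (Icc 0 Δ))
    (hα : ∀ j, ∀ s ∈ Icc 0 Δ, ‖H (x j + s)‖ ≤ α) :
    ‖(∫ y in {y : Fin q → ℝ | ∀ i, y i ∈ Icc 0 Δ}, (List.ofFn fun j => H (x j + y j)).prod) -
        Δ ^ q • (List.ofFn fun j => H (x j)).prod‖ ≤
      α ^ (q - 1) * Δ ^ q * ∑ k, ∫ s in (0 : ℝ)..Δ, ‖H' (x k + s)‖ := by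
  have h0 : (0 : ℝ) ∈ Icc 0 Δ := ⟨le_rfl, hΔ⟩
  have hinc : ∀ j, ∀ s ∈ Icc 0 Δ, ‖H (x j + s) - H (x j)‖ ≤ ∫ t in (0 : ℝ)..Δ, ‖H' (x j + t)‖ :=
    fun j s hs => by
      simpa using norm_sub_le_integral_norm_deriv_of_mem_Icc
        (fun t ht => (hderiv j t ht).comp_const_add (x j) t)
        ((hcont j).norm.intervalIntegrable_of_Icc hΔ) hs
  have hcube := setOf_forall_mem_Icc_eq_Icc (ι := Fin q) 0 Δ
  have hvol : volume.real {y : Fin q → ℝ | ∀ i, y i ∈ Icc 0 Δ} = Δ ^ q := by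
    rw [hcube, measureReal_def, Real.volume_Icc_pi_toReal fun _ => hΔ]
    simp
  have hint : IntegrableOn (fun y => (List.ofFn fun j => H (x j + y j)).prod)
      {y : Fin q → ℝ | ∀ i, y i ∈ Icc 0 Δ} := by
    refine ContinuousOn.integrableOn_compact (hcube ▸ isCompact_Icc) ?_
    refine continuous_list_ofFn_prod.comp_continuousOn (continuousOn_pi.2 fun j => ?_)
    have hH : ContinuousOn (fun s => H (x j + s)) (Icc 0 Δ) := fun s hs =>
      ((hderiv j s hs).comp_const_add (x j) s).continuousAt.continuousWithinAt
    exact hH.comp (continuous_apply j).continuousOn fun y hy => hy j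
  rw [← hvol, mul_right_comm]
  refine norm_setIntegral_sub_smul_le (hcube ▸ measure_Icc_lt_top) hint fun y hy => ?_
  calc _ ≤ α ^ (q - 1) * ∑ j, ‖H (x j + y j) - H (x j)‖ :=
        norm_list_ofFn_prod_sub_prod_le h1 _ _ (fun j => hα j _ (hy j))
          fun j => by simpa using hα j 0 h0
    _ ≤ _ := by
      rw [Finset.mul_sum, Finset.mul_sum]
      gcongr with j
      · exact pow_nonneg ((norm_nonneg _).trans (hα j 0 h0)) _
      · exact hinc j _ (hy j)

/-- Discretization error over a single hypercube: for continuously differentiable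
`H` with `‖H(s)‖ ≤ α` on `[0, MΔ]` and corner times `x_1,…,x_q ∈ [0,(M−1)Δ]`,
`‖∫_{[0,Δ]^q} H(x_1+y_1)⋯H(x_q+y_q) d^q y − Δ^q ∏_j H(x_j)‖
  ≤ α^{q−1} Δ^q ∑_k ∫_0^Δ ‖H'(x_k+s)‖ ds`. -/
theorem hypercube_discretization_error {N : ℕ} (M : ℕ) (hM : 1 ≤ M)
    (Δ α : ℝ) (hΔ : 0 < Δ) (q : ℕ)
    (H H' : ℝ → Matrix (Fin N) (Fin N) ℂ)
    (hderiv : ∀ s ∈ Set.Icc (0 : ℝ) (M * Δ), HasDerivAt H (H' s) s)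
    (hcont : ContinuousOn H' (Set.Icc (0 : ℝ) (M * Δ)))
    (hα : ∀ s ∈ Set.Icc (0 : ℝ) (M * Δ), ‖H s‖ ≤ α)
    (x : Fin q → ℝ)
    (hx : ∀ j, x j ∈ Set.Icc (0 : ℝ) ((M - 1 : ℕ) * Δ)) :
    ‖(∫ y in {y : Fin q → ℝ | ∀ i, y i ∈ Set.Icc (0 : ℝ) Δ},
          (List.ofFn fun j : Fin q => H (x j + y j)).prod) -
        Δ ^ q • (List.ofFn fun j : Fin q => H (x j)).prod‖ ≤
      α ^ (q - 1) * Δ ^ q *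
        ∑ k : Fin q, ∫ s in (0 : ℝ)..Δ, ‖H' (x k + s)‖ := by
  have hmem : ∀ j, ∀ s ∈ Icc 0 Δ, x j + s ∈ Icc (0 : ℝ) (M * Δ) := by
    intro j s hs
    have hxj := hx j
    rw [Nat.cast_sub hM, Nat.cast_one] at hxj
    constructor <;> nlinarith [hxj.1, hxj.2, hs.1, hs.2]
  exact norm_setIntegral_cube_list_ofFn_prod_sub_le Matrix.l2_opNorm_one_le hΔ.le
    (fun j s hs => hderiv _ (hmem j s hs)) (fun j => hcont.comp (by fun_prop) (hmem j))
    (fun j s hs => hα _ (hmem j s hs))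
end

section
/- Let q ≥ 2, t > 0, M ≥ 1, Δ = t/M, and α, h > 0 with q²Δh/(αt) ≤ ln 2. Then Δ^q α^q ∑_{p=1}^q (h/α)^p · C(q,p) · C(M, q−p) ≤ (t^q α^q / q!) · (q² Δ h/(α t)) · e^{q²Δh/(αt)} ≤ 2q (tα)^{q−1} Δ h / (q−1)!, where C(n,k) denotes the binomial coefficient. -/
open Finset

/-- Combinatorial boundary-volume estimate in the Riemann-sum discretization of
the Dyson series: for `q ≥ 2`, `Δ = t/M` and `q²Δh/(αt) ≤ ln 2`,
`Δ^q α^q ∑_{p=1}^q (h/α)^p C(q,p) C(M,q−p)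
  ≤ (t^q α^q/q!)·(q²Δh/(αt))·e^{q²Δh/(αt)} ≤ 2q (tα)^{q−1} Δ h/(q−1)!`. -/
theorem boundary_volume_estimate (q M : ℕ) (t α h : ℝ)
    (hq : 2 ≤ q) (hM : 1 ≤ M) (ht : 0 < t) (hα : 0 < α) (hh : 0 < h)
    (Δ : ℝ) (hΔ : Δ = t / M)
    (hsmall : (q : ℝ) ^ 2 * Δ * h / (α * t) ≤ Real.log 2) :
    Δ ^ q * α ^ q *
        ∑ p ∈ Finset.Icc 1 q,
          (h / α) ^ p * (Nat.choose q p : ℝ) * (Nat.choose M (q - p) : ℝ) ≤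
      (t ^ q * α ^ q / (Nat.factorial q)) * ((q : ℝ) ^ 2 * Δ * h / (α * t)) *
        Real.exp ((q : ℝ) ^ 2 * Δ * h / (α * t)) ∧
    (t ^ q * α ^ q / (Nat.factorial q)) * ((q : ℝ) ^ 2 * Δ * h / (α * t)) *
        Real.exp ((q : ℝ) ^ 2 * Δ * h / (α * t)) ≤
      2 * q * (t * α) ^ (q - 1) * Δ * h / (Nat.factorial (q - 1)) := by
  have hM0 : (0 : ℝ) < M := by exact_mod_cast Nat.lt_of_lt_of_le Nat.zero_lt_one hM
  have hΔ0 : 0 < Δ := by rw [hΔ]; positivity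
  set x : ℝ := (q : ℝ) ^ 2 * Δ * h / (α * t) with hxdef
  have hq0 : 0 < q := by omega
  have hq0' : (0 : ℝ) < q := by exact_mod_cast hq0
  have hx0 : 0 ≤ x := by rw [hxdef]; positivity
  have hΔM : Δ * M = t := by rw [hΔ]; field_simp
  have hxM : x = (q : ℝ) ^ 2 * h / (α * M) := by
    rw [hxdef, hΔ]; field_simp
  constructor
  · -- first inequality
    have hterm : ∀ p ∈ Finset.Icc 1 q,
        (h / α) ^ p * (Nat.choose q p : ℝ) * (Nat.choose M (q - p) : ℝ) ≤
          (M : ℝ) ^ q / (Nat.factorial q) * (x ^ p / Nat.factorial p) := by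
      intro p hp
      simp only [Finset.mem_Icc] at hp
      have hpq : p ≤ q := hp.2
      have h1 : (Nat.choose q p : ℝ) ≤ (q : ℝ) ^ p / (Nat.factorial p) := by
        have := Nat.choose_le_pow_div (α := ℝ) p q
        simpa using this
      have h2 : (Nat.choose M (q - p) : ℝ) ≤ (M : ℝ) ^ (q - p) / (Nat.factorial (q - p)) := by
        have := Nat.choose_le_pow_div (α := ℝ) (q - p) M
        simpa using this
      have hfac : (Nat.factorial q : ℝ) ≤ (q : ℝ) ^ p * (Nat.factorial (q - p)) := by
        have h3 : Nat.factorial q ≤ q ^ p * Nat.factorial (q - p) := by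
          rw [← Nat.factorial_mul_descFactorial hpq]
          have := Nat.descFactorial_le_pow q p
          calc Nat.factorial (q - p) * Nat.descFactorial q p
              ≤ Nat.factorial (q - p) * q ^ p := Nat.mul_le_mul_left _ this
            _ = q ^ p * Nat.factorial (q - p) := Nat.mul_comm _ _
        exact_mod_cast h3
      have hha : (0 : ℝ) ≤ (h / α) ^ p := by positivity
      have step1 : (h / α) ^ p * (Nat.choose q p : ℝ) * (Nat.choose M (q - p) : ℝ) ≤
          (h / α) ^ p * ((q : ℝ) ^ p / (Nat.factorial p)) *
            ((M : ℝ) ^ (q - p) / (Nat.factorial (q - p))) := by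
        apply mul_le_mul
        · exact mul_le_mul_of_nonneg_left h1 hha
        · exact h2
        · positivity
        · positivity
      refine step1.trans ?_
      -- now a pure algebraic inequality
      have hMpow : (M : ℝ) ^ (q - p) = (M : ℝ) ^ q / (M : ℝ) ^ p := by
        rw [eq_div_iff (by positivity), ← pow_add]
        congr 1; omega
      have hfq : (0 : ℝ) < Nat.factorial q := by exact_mod_cast Nat.factorial_pos q
      have hfp : (0 : ℝ) < Nat.factorial p := by exact_mod_cast Nat.factorial_pos p
      have hfqp : (0 : ℝ) < Nat.factorial (q - p) := by exact_mod_cast Nat.factorial_pos (q - p)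
      rw [hxM, hMpow]
      have hfq : (0 : ℝ) < Nat.factorial q := by exact_mod_cast Nat.factorial_pos q
      have hfp : (0 : ℝ) < Nat.factorial p := by exact_mod_cast Nat.factorial_pos p
      have hfqp : (0 : ℝ) < Nat.factorial (q - p) := by exact_mod_cast Nat.factorial_pos (q - p)
      have key : (1 : ℝ) / (Nat.factorial (q - p)) ≤ (q : ℝ) ^ p / (Nat.factorial q) := by
        rw [div_le_div_iff₀ hfqp hfq, one_mul]
        exact hfac
      calc (h / α) ^ p * ((q : ℝ) ^ p / (Nat.factorial p)) *
            ((M : ℝ) ^ q / (M : ℝ) ^ p / (Nat.factorial (q - p)))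
          = ((h / α) ^ p * (q : ℝ) ^ p * ((M : ℝ) ^ q / (M : ℝ) ^ p) / (Nat.factorial p)) *
              ((1 : ℝ) / (Nat.factorial (q - p))) := by ring
        _ ≤ ((h / α) ^ p * (q : ℝ) ^ p * ((M : ℝ) ^ q / (M : ℝ) ^ p) / (Nat.factorial p)) *
              ((q : ℝ) ^ p / (Nat.factorial q)) := by
            apply mul_le_mul_of_nonneg_left key (by positivity)
        _ = (M : ℝ) ^ q / (Nat.factorial q) *
              (((q : ℝ) ^ 2 * h / (α * (M : ℝ))) ^ p / Nat.factorial p) := by ring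
    have hsum : ∑ p ∈ Finset.Icc 1 q,
          (h / α) ^ p * (Nat.choose q p : ℝ) * (Nat.choose M (q - p) : ℝ) ≤
        (M : ℝ) ^ q / (Nat.factorial q) * ∑ p ∈ Finset.Icc 1 q, x ^ p / Nat.factorial p := by
      rw [Finset.mul_sum]
      exact Finset.sum_le_sum hterm
    have hsum2 : ∑ p ∈ Finset.Icc 1 q, x ^ p / (Nat.factorial p : ℝ) ≤ x * Real.exp x := by
      have hre : ∑ p ∈ Finset.Icc 1 q, x ^ p / (Nat.factorial p : ℝ) =
          ∑ j ∈ Finset.range q, x ^ (j + 1) / (Nat.factorial (j + 1) : ℝ) := by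
        rw [← Finset.Ico_add_one_right_eq_Icc, Finset.sum_Ico_eq_sum_range]
        refine Finset.sum_congr (by norm_num) fun j _ => by rw [Nat.add_comm]
      have hstep : ∑ j ∈ Finset.range q, x ^ (j + 1) / (Nat.factorial (j + 1) : ℝ) ≤
          x * ∑ j ∈ Finset.range q, x ^ j / (Nat.factorial j : ℝ) := by
        rw [Finset.mul_sum]
        apply Finset.sum_le_sum
        intro j _
        have hfle : (Nat.factorial j : ℝ) ≤ (Nat.factorial (j + 1) : ℝ) := by
          exact_mod_cast Nat.factorial_le (Nat.le_succ j)
        have hfj : (0 : ℝ) < Nat.factorial j := by exact_mod_cast Nat.factorial_pos j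
        rw [pow_succ, mul_comm (x ^ j) x, mul_div_assoc]
        apply mul_le_mul_of_nonneg_left _ hx0
        exact div_le_div_of_nonneg_left (by positivity) hfj hfle
      rw [hre]
      refine hstep.trans ?_
      apply mul_le_mul_of_nonneg_left _ hx0
      exact Real.sum_le_exp_of_nonneg hx0 q
    have hcoef : Δ ^ q * α ^ q * ((M : ℝ) ^ q / (Nat.factorial q)) =
        t ^ q * α ^ q / (Nat.factorial q) := by
      rw [← hΔM, mul_pow]; ring
    calc Δ ^ q * α ^ q *
          ∑ p ∈ Finset.Icc 1 q,
            (h / α) ^ p * (Nat.choose q p : ℝ) * (Nat.choose M (q - p) : ℝ)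
        ≤ Δ ^ q * α ^ q *
            ((M : ℝ) ^ q / (Nat.factorial q) * ∑ p ∈ Finset.Icc 1 q, x ^ p / Nat.factorial p) :=
          mul_le_mul_of_nonneg_left hsum (by positivity)
      _ = t ^ q * α ^ q / (Nat.factorial q) * ∑ p ∈ Finset.Icc 1 q, x ^ p / Nat.factorial p := by
          rw [← mul_assoc, hcoef]
      _ ≤ t ^ q * α ^ q / (Nat.factorial q) * (x * Real.exp x) := by
          apply mul_le_mul_of_nonneg_left hsum2 (by positivity)
      _ = t ^ q * α ^ q / (Nat.factorial q) * x * Real.exp x := by ring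
  · -- second inequality
    have hexp : Real.exp x ≤ 2 := by
      calc Real.exp x ≤ Real.exp (Real.log 2) := Real.exp_le_exp.2 hsmall
        _ = 2 := Real.exp_log (by norm_num)
    obtain ⟨r, rfl⟩ : ∃ r, q = r + 1 := ⟨q - 1, by omega⟩
    have hfq : (0 : ℝ) < Nat.factorial (r + 1) := by exact_mod_cast Nat.factorial_pos _
    have hmain : t ^ (r + 1) * α ^ (r + 1) / Nat.factorial (r + 1) * x * 2 =
        2 * (↑(r + 1) : ℝ) * (t * α) ^ (r + 1 - 1) * Δ * h / Nat.factorial (r + 1 - 1) := by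
      simp only [Nat.add_sub_cancel, Nat.factorial_succ, hxdef]
      push_cast
      rw [pow_succ, pow_succ, mul_pow]
      field_simp
    calc t ^ (r + 1) * α ^ (r + 1) / Nat.factorial (r + 1) * x * Real.exp x
        ≤ t ^ (r + 1) * α ^ (r + 1) / Nat.factorial (r + 1) * x * 2 := by
          apply mul_le_mul_of_nonneg_left hexp (by positivity)
      _ = 2 * (↑(r + 1) : ℝ) * (t * α) ^ (r + 1 - 1) * Δ * h / Nat.factorial (r + 1 - 1) :=
          hmain
end
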